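/- arXiv:2603.16396 — 3 statements merged into one kernel-verified Lean document; each statement's English description precedes it below -/
import Mathlib

section
/- For every integer n ≥ 3, the graph G_n is triangle-free, i.e., G_n contains no 3-clique. -/
open SimpleGraph

/-- The edge set of the Petersen graph on `Fin 10`, as a finset of unordered pairs. -/
def petersenEdges : Finset (Sym2 (Fin 10)) :=
  {s(0,1), s(1,2), s(2,3), s(3,4), s(0,4), s(0,5), s(1,6), s(2,7),
   s(3,8), s(4,9), s(5,7), s(7,9), s(6,9), s(6,8), s(5,8)}

/-- The fixed orientation `D` of the Petersen edges. -/
def dirD : Finset (Fin 10 × Fin 10) :=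
  {(0,1), (0,4), (0,5), (1,2), (1,6), (2,3), (2,7), (3,4),
   (3,8), (4,9), (5,7), (5,8), (6,8), (6,9), (7,9)}

lemma petersen_irrefl : ∀ x : Fin 10, s(x,x) ∉ petersenEdges := by decide

lemma dirD_irrefl : ∀ x : Fin 10, (x,x) ∉ dirD := by decide

/-- The graph `G n`: `n` copies of the Petersen graph, cross-wired by the `n`-cycle
according to the orientation `dirD`. -/
def G (n : ℕ) : SimpleGraph (ZMod n × Fin 10) where
  Adj p q :=
    (p.1 = q.1 ∧ s(p.2, q.2) ∈ petersenEdges) ∨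
    (q.1 = p.1 + 1 ∧ (p.2, q.2) ∈ dirD) ∨
    (p.1 = q.1 + 1 ∧ (q.2, p.2) ∈ dirD)
  symm := by
    constructor
    rintro ⟨i, x⟩ ⟨j, y⟩ (⟨h1, h2⟩ | ⟨h1, h2⟩ | ⟨h1, h2⟩)
    · exact Or.inl ⟨h1.symm, by rwa [Sym2.eq_swap]⟩
    · exact Or.inr (Or.inr ⟨h1, h2⟩)
    · exact Or.inr (Or.inl ⟨h1, h2⟩)
  loopless := by
    constructor
    rintro ⟨i, x⟩ (⟨_, h2⟩ | ⟨_, h2⟩ | ⟨_, h2⟩)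
    · exact petersen_irrefl x h2
    · exact dirD_irrefl x h2
    · exact dirD_irrefl x h2

/-!
Dropping the `ZMod n` coordinate maps `G n` homomorphically onto the Petersen graph, since every
edge of `G n`, inside a layer or between consecutive layers, lies over a Petersen edge. A
homomorphism is injective on cliques, so it pulls clique-freeness back, and the Petersen graph,
of girth 5, has no triangle.
-/

namespace SimpleGraph

variable {α β : Type*} {A : SimpleGraph α} {B : SimpleGraph β} {n : ℕ}

theorem CliqueFree.of_hom (f : A →g B) (hB : B.CliqueFree n) : A.CliqueFree n := by
  rw [cliqueFree_iff] at hB ⊢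
  refine ⟨fun c => hB.false ?_⟩
  let g := f.comp c.toHom
  exact g.toCopy g.injective_of_top_hom

end SimpleGraph

def petersenGraph : SimpleGraph (Fin 10) := fromEdgeSet petersenEdges

theorem petersenGraph_adj {x y : Fin 10} : petersenGraph.Adj x y ↔ s(x, y) ∈ petersenEdges := by
  rw [petersenGraph, fromEdgeSet_adj, Finset.mem_coe, and_iff_left_iff_imp]
  rintro h rfl
  exact petersen_irrefl x h

theorem petersenEdges_triangle_free (x y z : Fin 10) (hxy : s(x, y) ∈ petersenEdges)
    (hxz : s(x, z) ∈ petersenEdges) : s(y, z) ∉ petersenEdges := by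
  revert x y z; decide

theorem petersenGraph_cliqueFree_three : petersenGraph.CliqueFree 3 := by
  intro t ht
  obtain ⟨x, y, z, hxy, hxz, hyz, -⟩ := is3Clique_iff.mp ht
  rw [petersenGraph_adj] at hxy hxz hyz
  exact petersenEdges_triangle_free x y z hxy hxz hyz

theorem mk_mem_petersenEdges_of_mem_dirD {x y : Fin 10} (h : (x, y) ∈ dirD) :
    s(x, y) ∈ petersenEdges := by
  revert x y; decide

def projPetersen (n : ℕ) : G n →g petersenGraph where
  toFun := Prod.snd
  map_rel' := by
    rintro ⟨i, x⟩ ⟨j, y⟩ (⟨-, h⟩ | ⟨-, h⟩ | ⟨-, h⟩) <;> rw [petersenGraph_adj]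
    · exact h
    · exact mk_mem_petersenEdges_of_mem_dirD h
    · exact Sym2.eq_swap ▸ mk_mem_petersenEdges_of_mem_dirD h

theorem Gn_triangle_free_general (n : ℕ) : (G n).CliqueFree 3 :=
  petersenGraph_cliqueFree_three.of_hom (projPetersen n)

/-- For every `n ≥ 3`, the graph `G n` is triangle-free: it contains no 3-clique. -/
theorem Gn_triangle_free (n : ℕ) (hn : 3 ≤ n) : (G n).CliqueFree 3 :=
  Gn_triangle_free_general n
end

section
/- The graph G_5 is not Ramanujan: there exists a real eigenvalue λ of the adjacency matrix of G_5 with |λ| ≠ 6 and |λ| > 2√5. -/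
open SimpleGraph

open scoped Classical in
/-- The adjacency matrix of `G n` over `ℝ`. -/
noncomputable def adjMat (n : ℕ) : Matrix (ZMod n × Fin 10) (ZMod n × Fin 10) ℝ :=
  fun u v => if (G n).Adj u v then (1 : ℝ) else 0

/-!
The graph `G 5` has an adjacency eigenvalue `≈ 4.7309`, just above `2√5 ≈ 4.4721`. To certify
this without computing the spectrum, consider `p(t) = (t² - 20)(t² - 36)`, which is nonnegative
exactly when `|t| ≤ 2√5` or `|t| ≥ 6`. If every eigenvalue of the symmetric matrix `A` avoided
the open range `2√5 < |t| < 6`, then `p(A)` would be positive semidefinite. But for an explicit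
integer vector `x` we have `xᵀ p(A) x = (A²x - 20x) ⬝ (A²x - 36x) = -1488 < 0`.
-/

open Matrix Polynomial

section SymmetricMatrix

variable {n R : Type*} [Fintype n] [CommRing R] {A : Matrix n n R}

theorem Matrix.IsSymm.aeval [DecidableEq n] (hA : A.IsSymm) (p : R[X]) :
    (Polynomial.aeval A p).IsSymm := by
  induction p using Polynomial.induction_on' with
  | add p q hp hq => simpa only [map_add] using hp.add hq
  | monomial k a => simpa only [aeval_monomial, ← Algebra.smul_def] using (hA.pow k).smul a

theorem Matrix.IsSymm.dotProduct_mulVec_comm (hA : A.IsSymm) (x y : n → R) :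
    x ⬝ᵥ (A *ᵥ y) = (A *ᵥ x) ⬝ᵥ y := by
  rw [dotProduct_mulVec, ← mulVec_transpose, hA.eq]

theorem Matrix.IsSymm.dotProduct_aeval_mul_mulVec [DecidableEq n] (hA : A.IsSymm) (p q : R[X])
    (x : n → R) :
    x ⬝ᵥ (Polynomial.aeval A (p * q) *ᵥ x) =
      (Polynomial.aeval A p *ᵥ x) ⬝ᵥ (Polynomial.aeval A q *ᵥ x) := by
  rw [map_mul, ← mulVec_mulVec, (hA.aeval p).dotProduct_mulVec_comm]

theorem Matrix.aeval_X_sq_sub_C_mulVec [DecidableEq n] (A : Matrix n n R) (a : R) (x : n → R) :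
    aeval A (X ^ 2 - C a) *ᵥ x = A *ᵥ (A *ᵥ x) - a • x := by
  rw [map_sub, aeval_X_pow, aeval_C, sub_mulVec, sq, mulVec_mulVec,
    Algebra.algebraMap_eq_smul_one, smul_mulVec, one_mulVec]

end SymmetricMatrix

open scoped MatrixOrder in
theorem Matrix.IsHermitian.exists_mem_spectrum_eval_neg {n : Type*} [Fintype n]
    [DecidableEq n] {A : Matrix n n ℝ} (hA : A.IsHermitian) (p : ℝ[X]) (x : n → ℝ)
    (hx : x ⬝ᵥ (aeval A p *ᵥ x) < 0) : ∃ μ ∈ spectrum ℝ A, p.eval μ < 0 := by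
  by_contra! hp
  have hpA : 0 ≤ aeval A p := cfc_polynomial p A hA.isSelfAdjoint ▸ cfc_nonneg hp
  simpa using (hpA.posSemidef.dotProduct_mulVec_nonneg x).trans_lt hx

theorem SimpleGraph.adjMatrix_mulVec_comp {V α β : Type*} [Fintype V] (G : SimpleGraph V)
    [DecidableRel G.Adj] [NonAssocSemiring α] [NonAssocSemiring β] (f : α →+* β)
    (x : V → α) :
    G.adjMatrix β *ᵥ (f ∘ x) = f ∘ (G.adjMatrix α *ᵥ x) := by
  ext v
  simp [adjMatrix_mulVec_apply, map_sum]

theorem abs_ne_six_and_two_mul_sqrt_five_lt_abs {μ : ℝ} (h : (μ ^ 2 - 20) * (μ ^ 2 - 36) < 0) :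
    |μ| ≠ 6 ∧ 2 * √5 < |μ| := by
  have h20 : 20 < μ ^ 2 := by nlinarith
  have h36 : μ ^ 2 < 36 := by nlinarith
  refine ⟨fun h6 => ?_, ?_⟩
  · rw [← sq_abs, h6] at h36
    norm_num at h36
  · calc 2 * √5 = √20 := by
          rw [show (20 : ℝ) = 2 ^ 2 * 5 by norm_num, Real.sqrt_mul' _ (by norm_num),
            Real.sqrt_sq (by norm_num)]
      _ < √(μ ^ 2) := Real.sqrt_lt_sqrt (by norm_num) h20
      _ = |μ| := Real.sqrt_sq_eq_abs μ

instance (n : ℕ) : DecidableRel (G n).Adj := fun p q => decidable_of_iff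
  ((p.1 = q.1 ∧ s(p.2, q.2) ∈ petersenEdges) ∨ (q.1 = p.1 + 1 ∧ (p.2, q.2) ∈ dirD) ∨
    (p.1 = q.1 + 1 ∧ (q.2, p.2) ∈ dirD)) Iff.rfl

theorem adjMat_eq_adjMatrix (n : ℕ) : adjMat n = (G n).adjMatrix ℝ := by
  ext u v
  rw [adjMat, adjMatrix_apply]
  congr

/-- A rounded multiple of an eigenvector of `G 5` for its eigenvalue `≈ 4.7309`;
row `i` holds the entries on the layer `{i} × Fin 10`. -/
def approxEigenvector : ZMod 5 × Fin 10 → ℤ := fun v => !![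
   2,  2,  2,  2,  1,  2,  2,  1,  1,  0;
   0,  1,  1,  1,  2,  1,  2,  2,  2,  2;
  -2, -1, -1, -1,  0, -1,  0,  0,  0,  1;
  -1, -2, -2, -2, -2, -2, -2, -2, -2, -1;
   1,  0,  0,  0, -1,  0, -1, -1, -2, -2] v.1 v.2

theorem dotProduct_approxEigenvector_eq :
    let A := (G 5).adjMatrix ℤ
    let x := approxEigenvector
    (A *ᵥ (A *ᵥ x) - 20 • x) ⬝ᵥ (A *ᵥ (A *ᵥ x) - 36 • x) = -1488 := by
  decide +kernel

theorem dotProduct_aeval_approxEigenvector_neg :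
    (Int.castRingHom ℝ ∘ approxEigenvector) ⬝ᵥ
      (aeval ((G 5).adjMatrix ℝ) ((X ^ 2 - C 20) * (X ^ 2 - C 36) : ℝ[X]) *ᵥ
        (Int.castRingHom ℝ ∘ approxEigenvector)) < 0 := by
  rw [(isSymm_adjMatrix _).dotProduct_aeval_mul_mulVec, aeval_X_sq_sub_C_mulVec,
    aeval_X_sq_sub_C_mulVec, adjMatrix_mulVec_comp, adjMatrix_mulVec_comp]
  have h := congrArg (Int.castRingHom ℝ) dotProduct_approxEigenvector_eq
  rw [RingHom.map_dotProduct] at h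
  convert h.trans_lt (by norm_num : Int.castRingHom ℝ (-1488) < 0) using 2 <;> ext <;> simp

/-- `G 5` is not Ramanujan: it has a real eigenvalue `λ` with `|λ| ≠ 6` and
`|λ| > 2√5`. -/
theorem G5_not_ramanujan :
    ∃ lam : ℝ, lam ∈ spectrum ℝ (adjMat 5) ∧ |lam| ≠ 6 ∧ 2 * Real.sqrt 5 < |lam| := by
  have hA : ((G 5).adjMatrix ℝ).IsHermitian := isHermitian_iff_isSymm.mpr (isSymm_adjMatrix _)
  obtain ⟨μ, hμ, hp⟩ :=
    hA.exists_mem_spectrum_eval_neg _ _ dotProduct_aeval_approxEigenvector_neg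
  refine ⟨μ, adjMat_eq_adjMatrix 5 ▸ hμ, abs_ne_six_and_two_mul_sqrt_five_lt_abs ?_⟩
  simpa using hp
end

section
/- For every n ∈ {3, 4, 5, 6, 7}, the graph G_n is not edge-transitive: it is not the case that for every pair of edges e₁, e₂ of G_n there exists a graph automorphism φ : G_n ≃g G_n whose induced map on unordered pairs sends e₁ to e₂. -/
open SimpleGraph

/-!
An automorphism preserves the number of walks of length 4 between the endpoints of an edge,
i.e. the entry of `A ^ 4` for the adjacency matrix `A`, in either order since `A` is symmetric.
The Petersen edges `(0,0)(0,1)` and `(0,0)(0,4)` of `G n` have 23 and 20 such walks for `n = 3`,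
22 and 14 for `n = 4`, and 22 and 13 for `n = 5, 6, 7`. (Coarser invariants fail: `G n` is
6-regular and triangle-free, and every edge lies on exactly four 4-cycles.)
-/

namespace SimpleGraph

open Finset

variable {V W : Type*} [Fintype V] [DecidableEq V] [Fintype W] [DecidableEq W]
  {G : SimpleGraph V} {H : SimpleGraph W} [DecidableRel G.Adj] [DecidableRel H.Adj]

theorem Iso.adjMatrix_pow_apply {α : Type*} [Semiring α] (φ : G ≃g H) (k : ℕ) (u v : V) :
    (H.adjMatrix α ^ k) (φ u) (φ v) = (G.adjMatrix α ^ k) u v := by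
  rw [← φ.reindex_adjMatrix α, ← Matrix.coe_reindexAlgEquiv ℕ, ← map_pow,
    Matrix.coe_reindexAlgEquiv, Matrix.reindex_apply]
  simp

theorem Iso.adjMatrix_pow_apply_of_map_edge {α : Type*} [CommSemiring α] (φ : G ≃g H) (k : ℕ)
    {u v : V} {u' v' : W} (h : Sym2.map φ s(u, v) = s(u', v')) :
    (H.adjMatrix α ^ k) u' v' = (G.adjMatrix α ^ k) u v := by
  rw [Sym2.map_mk, Sym2.eq_iff] at h
  obtain ⟨rfl, rfl⟩ | ⟨rfl, rfl⟩ := h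
  · exact φ.adjMatrix_pow_apply k u v
  · rw [← ((isSymm_adjMatrix (α := α) G).pow k).apply u v, ← φ.adjMatrix_pow_apply]

theorem adjMatrix_mul_self_apply (u v : V) :
    (G.adjMatrix ℕ * G.adjMatrix ℕ) u v = #(G.neighborFinset u ∩ G.neighborFinset v) := by
  simp only [adjMatrix_mul_apply, adjMatrix_apply, sum_boole, Nat.cast_id]
  congr 1
  ext w
  simp [adj_comm]

theorem adjMatrix_pow_four_apply (u v : V) :
    (G.adjMatrix ℕ ^ 4) u v =
      ∑ w ∈ G.neighborFinset u, ∑ z ∈ G.neighborFinset v,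
        #(G.neighborFinset w ∩ G.neighborFinset z) := by
  have h4 : G.adjMatrix ℕ ^ 4 =
      G.adjMatrix ℕ * (G.adjMatrix ℕ * G.adjMatrix ℕ) * G.adjMatrix ℕ := by
    simp only [pow_succ, pow_zero, one_mul, mul_assoc]
  rw [h4, mul_adjMatrix_apply]
  simp only [G.adjMatrix_mul_apply (G.adjMatrix ℕ * G.adjMatrix ℕ) u, adjMatrix_mul_self_apply]
  exact sum_comm

theorem not_forall_exists_iso_map_edge_of_adjMatrix_pow_apply_ne (k : ℕ) {u v u' v' : V}
    (h : G.Adj u v) (h' : G.Adj u' v')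
    (hne : (G.adjMatrix ℕ ^ k) u v ≠ (G.adjMatrix ℕ ^ k) u' v') :
    ¬ ∀ e₁ ∈ G.edgeSet, ∀ e₂ ∈ G.edgeSet, ∃ φ : G ≃g G, Sym2.map φ e₁ = e₂ := by
  intro htrans
  obtain ⟨φ, hφ⟩ := htrans s(u, v) h s(u', v') h'
  exact hne (φ.adjMatrix_pow_apply_of_map_edge k hφ).symm

end SimpleGraph

instance inst_s14 (n : ℕ) : DecidableRel (G n).Adj := fun p q =>
  inferInstanceAs (Decidable ((p.1 = q.1 ∧ s(p.2, q.2) ∈ petersenEdges) ∨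
    (q.1 = p.1 + 1 ∧ (p.2, q.2) ∈ dirD) ∨
    (p.1 = q.1 + 1 ∧ (q.2, p.2) ∈ dirD)))

theorem G_adj_of_mem_petersenEdges {n : ℕ} (i : ZMod n) {x y : Fin 10}
    (h : s(x, y) ∈ petersenEdges) : (G n).Adj (i, x) (i, y) :=
  Or.inl ⟨rfl, h⟩

set_option maxHeartbeats 1000000 in
/-- For every `n ∈ {3, 4, 5, 6, 7}`, the graph `G n` is not edge-transitive: it is not the
case that every edge can be mapped to every other edge by a graph automorphism. -/
theorem Gn_not_edge_transitive :
    ∀ n ∈ ({3, 4, 5, 6, 7} : Set ℕ),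
      ¬ ∀ e₁ ∈ (G n).edgeSet, ∀ e₂ ∈ (G n).edgeSet,
          ∃ φ : (G n) ≃g (G n), Sym2.map φ e₁ = e₂ := by
  intro n hn
  obtain rfl | rfl | rfl | rfl | rfl := hn <;>
  · refine not_forall_exists_iso_map_edge_of_adjMatrix_pow_apply_ne 4
      (G_adj_of_mem_petersenEdges 0 (by decide : s(0, 1) ∈ petersenEdges))
      (G_adj_of_mem_petersenEdges 0 (by decide : s(0, 4) ∈ petersenEdges)) ?_
    rw [adjMatrix_pow_four_apply, adjMatrix_pow_four_apply]
    decide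
end
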